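/- Define f(u) = (1−e^{−u})/√(1+(1−e^{−u})²) and g(u) = 2·artanh(√2·f(u)) − √2·artanh(f(u)). Then g(u) ≥ u for every u ≥ 0. -/

import Mathlib

open Real

/-- The inverse hyperbolic tangent, `artanh x = (1/2) log ((1+x)/(1−x))`. -/
noncomputable def artanh (x : ℝ) : ℝ := (1 / 2) * Real.log ((1 + x) / (1 - x))

/-- `f u = (1−e^{−u})/√(1+(1−e^{−u})²)`. -/
noncomputable def f (u : ℝ) : ℝ :=
  (1 - Real.exp (-u)) / Real.sqrt (1 + (1 - Real.exp (-u)) ^ 2)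

/-- `g u = 2 artanh(√2 f u) − √2 artanh(f u)`, the geometric complexity of the
two-level reset map with `u = wτ`. -/
noncomputable def g (u : ℝ) : ℝ :=
  2 * _root_.artanh (Real.sqrt 2 * f u) - Real.sqrt 2 * _root_.artanh (f u)


/-! Write `z = 1 - e^{-u}` and `φ z = z / √(1 + z²)`, so that `f u = φ z`. Since
`1 - φ² = 1 / (1 + z²)` and `1 - 2φ² = (1 - z²) / (1 + z²)`, the chain rule collapses to
`g' u = √2 · √(1 + z²) / (1 + z)`, which is at least `1` because `2 (1 + z²) ≥ (1 + z)²`.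
As `g 0 = 0`, the mean value theorem gives `g u ≥ u`. -/

lemma hasDerivAt_artanh {x : ℝ} (hx : 1 - x ^ 2 ≠ 0) :
    HasDerivAt _root_.artanh (1 / (1 - x ^ 2)) x := by
  have hp : 1 + x ≠ 0 := fun h => hx (by linear_combination (1 - x) * h)
  have hm : 1 - x ≠ 0 := fun h => hx (by linear_combination (1 + x) * h)
  have hq := (((hasDerivAt_id x).const_add 1).div ((hasDerivAt_id x).const_sub 1) hm).log
    (div_ne_zero hp hm)
  refine (hq.const_mul (1 / 2)).congr_deriv ?_
  simp only [id, Pi.div_apply]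
  field_simp
  ring

lemma hasDerivAt_div_sqrt_one_add_sq (z : ℝ) :
    HasDerivAt (fun z => z / √(1 + z ^ 2)) (1 / √(1 + z ^ 2) ^ 3) z := by
  have hQ : 0 < 1 + z ^ 2 := by positivity
  have hs : 0 < √(1 + z ^ 2) := sqrt_pos.2 hQ
  have hd := (hasDerivAt_id z).div (((hasDerivAt_pow 2 z).const_add 1).sqrt hQ.ne') hs.ne'
  refine hd.congr_deriv ?_
  simp only [id]
  field_simp
  rw [sq_sqrt hQ.le]
  ring

lemma hasDerivAt_complexity {z : ℝ} (hz : z ^ 2 < 1) :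
    HasDerivAt
      (fun z => 2 * _root_.artanh (√2 * (z / √(1 + z ^ 2))) - √2 * _root_.artanh (z / √(1 + z ^ 2)))
      (√2 * √(1 + z ^ 2) / (1 - z ^ 2)) z := by
  have hQ : 0 < 1 + z ^ 2 := by positivity
  have hs2 : √(1 + z ^ 2) ^ 2 = 1 + z ^ 2 := sq_sqrt hQ.le
  have hs : 0 < √(1 + z ^ 2) := sqrt_pos.2 hQ
  have hr2 : √2 ^ 2 = 2 := sq_sqrt zero_le_two
  have h₁ : 1 - (z / √(1 + z ^ 2)) ^ 2 = 1 / (1 + z ^ 2) := by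
    rw [div_pow, hs2]; field_simp; ring
  have h₂ : 1 - (√2 * (z / √(1 + z ^ 2))) ^ 2 = (1 - z ^ 2) / (1 + z ^ 2) := by
    rw [mul_pow, div_pow, hs2, hr2]; field_simp; ring
  have hφ := hasDerivAt_div_sqrt_one_add_sq z
  have hA₁ := (hasDerivAt_artanh (by rw [h₂]; exact (div_pos (by linarith) hQ).ne')).comp z
    (hφ.const_mul √2)
  have hA₂ := (hasDerivAt_artanh (by rw [h₁]; positivity)).comp z hφ
  refine ((hA₁.const_mul 2).sub (hA₂.const_mul √2)).congr_deriv ?_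
  rw [h₁, h₂]
  have hz₀ : 1 - z ^ 2 ≠ 0 := by linarith
  field_simp
  linear_combination (-(√(1 + z ^ 2) ^ 2 + 1 + z ^ 2)) * hs2

lemma hasDerivAt_g {u : ℝ} (hu : exp (-u) < 2) :
    HasDerivAt g (√2 * √(1 + (1 - exp (-u)) ^ 2) / (2 - exp (-u))) u := by
  have hz : (1 - exp (-u)) ^ 2 < 1 := by
    have := exp_pos (-u)
    nlinarith
  have hexp : HasDerivAt (fun u => 1 - exp (-u)) (exp (-u)) u := by
    simpa using ((hasDerivAt_neg u).exp).const_sub 1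
  refine ((hasDerivAt_complexity hz).comp u hexp).congr_deriv ?_
  rw [show 1 - (1 - exp (-u)) ^ 2 = exp (-u) * (2 - exp (-u)) by ring]
  field_simp [(exp_pos (-u)).ne']

lemma one_add_le_sqrt_two_mul_sqrt_one_add_sq (z : ℝ) : 1 + z ≤ √2 * √(1 + z ^ 2) := by
  rw [← sqrt_mul zero_le_two]
  exact (le_abs_self _).trans (abs_le_sqrt (by nlinarith [sq_nonneg (1 - z)]))

lemma g_zero : g 0 = 0 := by
  simp [g, f, _root_.artanh]

/-- **Complexity–error trade-off for the two-level reset map:** `g u ≥ u`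
for all `u ≥ 0`, i.e. `e^{C(T)} ε(T) ≥ 1` with `ε(T) = e^{−u}`. -/
theorem two_level_complexity_ge (u : ℝ) (hu : 0 ≤ u) : g u ≥ u := by
  have hderiv : ∀ x ∈ Set.Ici (0 : ℝ),
      HasDerivAt g (√2 * √(1 + (1 - exp (-x)) ^ 2) / (2 - exp (-x))) x := fun x hx =>
    hasDerivAt_g (by linarith [exp_le_one_iff.2 (neg_nonpos.2 (Set.mem_Ici.1 hx))])
  have hslope : ∀ x ∈ interior (Set.Ici (0 : ℝ)), 1 ≤ deriv g x := by
    intro x hx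
    rw [interior_Ici] at hx
    have hexp : exp (-x) ≤ 1 := exp_le_one_iff.2 (neg_nonpos.2 (le_of_lt hx))
    rw [(hderiv x (Set.mem_Ici.2 hx.le)).deriv, one_le_div (by linarith)]
    linarith [one_add_le_sqrt_two_mul_sqrt_one_add_sq (1 - exp (-x))]
  have hmvt := (convex_Ici (0 : ℝ)).mul_sub_le_image_sub_of_le_deriv
    (fun x hx => (hderiv x hx).continuousAt.continuousWithinAt)
    (fun x hx => (hderiv x (interior_subset hx)).differentiableAt.differentiableWithinAt)
    hslope 0 Set.self_mem_Ici u hu hu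
  rw [g_zero] at hmvt
  linarith
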